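/- Let γ : I → ℝⁿ (n ≥ 2) be a smooth curve on an open interval with γ'(t) ≠ 0 for all t, λ = |γ'|, let x₂ : I → ℝ and y₂ : I → ℝⁿ be smooth, and define u(t,s) = (s·λ(t) + s²·x₂(t), γ(t) + s²·y₂(t)) for small s > 0. Then τ(u)⁰ = o(s²) and τ(u)ⁱ = o(s²) for all 1 ≤ i ≤ n (as s → 0⁺, locally uniformly in t) if and only if x₂ ≡ 0 and y₂ = (1/2)·( γ'' − (2⟨γ',γ''⟩/λ²)·γ' ), i.e. y₂ = (1/2)λ²α where α = (1/λ²)(γ'' − (2⟨γ',γ''⟩/λ²)γ'). -/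

import Mathlib

open scoped RealInnerProductSpace

noncomputable section

/-- `ℝⁿ` with the Euclidean inner product. -/
abbrev Euc (n : ℕ) : Type := EuclideanSpace ℝ (Fin n)

/-- Partial derivative in the boundary variable `t`. -/
def pdt {α : Type*} [NormedAddCommGroup α] [NormedSpace ℝ α]
    (f : ℝ → ℝ → α) (t s : ℝ) : α := deriv (fun t' => f t' s) t

/-- Partial derivative in the boundary defining variable `s`. -/
def pds {α : Type*} [NormedAddCommGroup α] [NormedSpace ℝ α]
    (f : ℝ → ℝ → α) (t s : ℝ) : α := deriv (fun s' => f t s') s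

/-- Normal component `τ(u)⁰` of the tension field of the map `u = (x, y)` from the
hyperbolic upper half-plane `{(t,s) : s > 0}` with metric `(dt² + ds²)/s²` to the upper
half-space `{(x,y) : x > 0}` with metric `(dx² + |dy|²)/x²`:
`τ(u)⁰ = s²[∂ₛ²x + ∂ₜ²x − ((∂ₛx)² + (∂ₜx)²)/x + (|∂ₛy|² + |∂ₜy|²)/x]`. -/
def tau0 {n : ℕ} (x : ℝ → ℝ → ℝ) (y : ℝ → ℝ → Euc n) (t s : ℝ) : ℝ :=
  s ^ 2 * (pds (pds x) t s + pdt (pdt x) t s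
    - ((pds x t s) ^ 2 + (pdt x t s) ^ 2) / x t s
    + (‖pds y t s‖ ^ 2 + ‖pdt y t s‖ ^ 2) / x t s)

/-- Tangential components `(τ(u)ⁱ)ᵢ` of the tension field, as a vector in `ℝⁿ`:
`τ(u)ⁱ = s²[∂ₛ²yⁱ + ∂ₜ²yⁱ − (2/x)(∂ₛx·∂ₛyⁱ + ∂ₜx·∂ₜyⁱ)]`. -/
def tauTan {n : ℕ} (x : ℝ → ℝ → ℝ) (y : ℝ → ℝ → Euc n) (t s : ℝ) : Euc n :=
  (s ^ 2) • (pds (pds y) t s + pdt (pdt y) t s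
    - (2 / x t s) • (pds x t s • pds y t s + pdt x t s • pdt y t s))

/-- `F(t,s) = o(sᵏ)` as `s → 0⁺`, locally uniformly in `t ∈ I`. -/
def LittleOAt (I : Set ℝ) (F : ℝ → ℝ → ℝ) (k : ℕ) : Prop :=
  ∀ K : Set ℝ, K ⊆ I → IsCompact K → ∀ ε : ℝ, 0 < ε → ∃ δ : ℝ, 0 < δ ∧
    ∀ s : ℝ, 0 < s → s < δ → ∀ t ∈ K, |F t s| ≤ ε * s ^ k

/-- `F(t,s) = O(sᵏ)` as `s → 0⁺`, locally uniformly in `t ∈ I`. -/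
def BigOAt (I : Set ℝ) (F : ℝ → ℝ → ℝ) (k : ℕ) : Prop :=
  ∀ K : Set ℝ, K ⊆ I → IsCompact K → ∃ C : ℝ, 0 < C ∧ ∃ δ : ℝ, 0 < δ ∧
    ∀ s : ℝ, 0 < s → s < δ → ∀ t ∈ K, |F t s| ≤ C * s ^ k

/-! Along the ansatz all partial derivatives are polynomial in `s`, and since `λ = |γ'|` the
`1/s`-singular part `(|∂ₜy|² − (∂ₛx)²)/x` of `τ⁰` cancels. Hence `τ(u) = s² Φ(t, s)` with `Φ`
continuous up to `s = 0`, and `τ(u) = o(s²)` forces `Φ(t, 0) = 0`: for the normal component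
`Φ(t, 0) = −2x₂`, for the tangential one `Φ(t, 0) = γ'' − 2y₂ − (2λ'/λ)γ'` with
`λ' = ⟨γ', γ''⟩/λ`. Conversely, once these vanish, `Φ(t, s) = s G(t, s)` with `G` continuous on
`I × [0, 1]`, hence bounded on `K × [0, 1]` for compact `K ⊆ I`. -/

open Filter Topology Set Function

section ContDiffAt

variable {𝕜 : Type*} [NontriviallyNormedField 𝕜] {F : Type*} [NormedAddCommGroup F]
  [NormedSpace 𝕜 F] {f : 𝕜 → F} {x : 𝕜} {n : WithTop ℕ∞}

theorem ContDiffAt.eventually_differentiableAt (h : ContDiffAt 𝕜 n f x) (hn : 1 ≤ n) :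
    ∀ᶠ y in 𝓝 x, DifferentiableAt 𝕜 f y :=
  ((h.of_le hn).eventually (by simp)).mono fun _ hy => hy.differentiableAt one_ne_zero

theorem ContDiffAt.differentiableAt_deriv (h : ContDiffAt 𝕜 n f x) (hn : 2 ≤ n) :
    DifferentiableAt 𝕜 (deriv f) x :=
  (h.derivWithin (m := 1) (by simpa [one_add_one_eq_two] using hn)).differentiableAt one_ne_zero

end ContDiffAt

theorem HasDerivAt.norm {F : Type*} [NormedAddCommGroup F] [InnerProductSpace ℝ F]
    {f : ℝ → F} {f' : F} {t : ℝ} (hf : HasDerivAt f f' t) (h0 : f t ≠ 0) :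
    HasDerivAt (fun u => ‖f u‖) (⟪f t, f'⟫ / ‖f t‖) t := by
  have h := hf.norm_sq.sqrt (pow_ne_zero 2 (norm_ne_zero_iff.2 h0))
  simp only [Real.sqrt_sq (norm_nonneg _)] at h
  convert h using 1
  field_simp

theorem LittleOAt.of_abs_le_pow_succ_mul {E : Type*} [NormedAddCommGroup E] {I : Set ℝ}
    {F : ℝ → ℝ → ℝ} {G : ℝ → ℝ → E} {k : ℕ}
    (hG : ContinuousOn (uncurry G) (I ×ˢ Icc 0 1))
    (hF : ∀ t ∈ I, ∀ s ∈ Ioo (0 : ℝ) 1, |F t s| ≤ s ^ (k + 1) * ‖G t s‖) :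
    LittleOAt I F k := by
  intro K hKI hK ε hε
  obtain ⟨C, hC⟩ := (hK.prod isCompact_Icc).exists_bound_of_continuousOn
    (hG.mono (prod_mono hKI subset_rfl))
  have hC₁ : 0 < max C 1 := lt_max_of_lt_right one_pos
  refine ⟨min 1 (ε / max C 1), by positivity, fun s hs hsδ t ht => ?_⟩
  have hs₁ : s < 1 := hsδ.trans_le (min_le_left _ _)
  have hsC : s * max C 1 ≤ ε := by
    have := hsδ.trans_le (min_le_right _ _)
    rw [lt_div_iff₀ hC₁] at this
    exact this.le
  have hGC : ‖G t s‖ ≤ max C 1 :=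
    (hC (t, s) ⟨ht, hs.le, hs₁.le⟩).trans (le_max_left _ _)
  calc |F t s| ≤ s ^ (k + 1) * ‖G t s‖ := hF t (hKI ht) s ⟨hs, hs₁⟩
    _ ≤ s ^ k * (s * max C 1) := by rw [pow_succ, mul_assoc]; gcongr
    _ ≤ ε * s ^ k := by rw [mul_comm ε]; gcongr

theorem LittleOAt.eq_zero_of_eq_pow_smul {E : Type*} [NormedAddCommGroup E] [NormedSpace ℝ E]
    {I : Set ℝ} {G : ℝ → ℝ → E} {k : ℕ} {t : ℝ} {Φ : ℝ → E} {c : E}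
    (h : LittleOAt I (fun t s => ‖G t s‖) k) (ht : t ∈ I)
    (hG : ∀ s > 0, G t s = s ^ k • Φ s) (hΦ : Tendsto Φ (𝓝[>] 0) (𝓝 c)) : c = 0 := by
  refine norm_le_zero_iff.1 (le_of_forall_gt_imp_ge_of_dense fun ε hε => ?_)
  obtain ⟨δ, hδ, hbound⟩ := h {t} (singleton_subset_iff.2 ht) isCompact_singleton ε hε
  refine le_of_tendsto hΦ.norm ?_
  filter_upwards [Ioo_mem_nhdsGT hδ] with s ⟨hs, hsδ⟩
  have hsk : 0 < s ^ k := pow_pos hs k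
  have := hbound s hs hsδ t rfl
  rw [abs_norm, hG s hs, norm_smul, Real.norm_of_nonneg hsk.le, mul_comm ε] at this
  exact le_of_mul_le_mul_left this hsk

section Ansatz

variable {E : Type*} [NormedAddCommGroup E] [NormedSpace ℝ E]

theorem pds_add_sq_smul (f g : ℝ → E) (t s : ℝ) :
    pds (fun t s => f t + s ^ 2 • g t) t s = (2 * s) • g t := by
  have h := ((hasDerivAt_pow 2 s).smul_const (g t)).const_add (f t)
  simpa [pds] using h.deriv

theorem pds_pds_add_sq_smul (f g : ℝ → E) (t s : ℝ) :
    pds (pds fun t s => f t + s ^ 2 • g t) t s = (2 : ℝ) • g t := by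
  have h := ((hasDerivAt_id s).const_mul 2).smul_const (g t)
  rw [pds, funext (pds_add_sq_smul f g t)]
  simpa using h.deriv

theorem pdt_add_sq_smul {f g : ℝ → E} {t : ℝ} (hf : DifferentiableAt ℝ f t)
    (hg : DifferentiableAt ℝ g t) (s : ℝ) :
    pdt (fun t s => f t + s ^ 2 • g t) t s = deriv f t + s ^ 2 • deriv g t :=
  (hf.hasDerivAt.add (hg.hasDerivAt.const_smul (s ^ 2))).deriv

theorem pdt_pdt_add_sq_smul {f g : ℝ → E} {t : ℝ} (hf : ContDiffAt ℝ 2 f t)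
    (hg : ContDiffAt ℝ 2 g t) (s : ℝ) :
    pdt (pdt fun t s => f t + s ^ 2 • g t) t s
      = deriv (deriv f) t + s ^ 2 • deriv (deriv g) t := by
  have h : (fun u => pdt (fun t s => f t + s ^ 2 • g t) u s)
      =ᶠ[𝓝 t] fun u => deriv f u + s ^ 2 • deriv g u := by
    filter_upwards [hf.eventually_differentiableAt one_le_two,
      hg.eventually_differentiableAt one_le_two] with u hfu hgu
    exact pdt_add_sq_smul hfu hgu s
  rw [pdt, h.deriv_eq]
  exact pdt_add_sq_smul (hf.differentiableAt_deriv le_rfl) (hg.differentiableAt_deriv le_rfl) s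

theorem pds_mul_add_sq_mul (f g : ℝ → ℝ) (t s : ℝ) :
    pds (fun t s => s * f t + s ^ 2 * g t) t s = f t + 2 * s * g t := by
  have h := ((hasDerivAt_id s).mul_const (f t)).fun_add ((hasDerivAt_pow 2 s).mul_const (g t))
  simpa [pds] using h.deriv

theorem pds_pds_mul_add_sq_mul (f g : ℝ → ℝ) (t s : ℝ) :
    pds (pds fun t s => s * f t + s ^ 2 * g t) t s = 2 * g t := by
  rw [pds, funext (pds_mul_add_sq_mul f g t)]
  simp

theorem pdt_mul_add_sq_mul {f g : ℝ → ℝ} {t : ℝ} (hf : DifferentiableAt ℝ f t)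
    (hg : DifferentiableAt ℝ g t) (s : ℝ) :
    pdt (fun t s => s * f t + s ^ 2 * g t) t s = s * deriv f t + s ^ 2 * deriv g t :=
  ((hf.hasDerivAt.const_mul s).add (hg.hasDerivAt.const_mul (s ^ 2))).deriv

theorem pdt_pdt_mul_add_sq_mul {f g : ℝ → ℝ} {t : ℝ} (hf : ContDiffAt ℝ 2 f t)
    (hg : ContDiffAt ℝ 2 g t) (s : ℝ) :
    pdt (pdt fun t s => s * f t + s ^ 2 * g t) t s
      = s * deriv (deriv f) t + s ^ 2 * deriv (deriv g) t := by
  have h : (fun u => pdt (fun t s => s * f t + s ^ 2 * g t) u s)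
      =ᶠ[𝓝 t] fun u => s * deriv f u + s ^ 2 * deriv g u := by
    filter_upwards [hf.eventually_differentiableAt one_le_two,
      hg.eventually_differentiableAt one_le_two] with u hfu hgu
    exact pdt_mul_add_sq_mul hfu hgu s
  rw [pdt, h.deriv_eq]
  exact pdt_mul_add_sq_mul (hf.differentiableAt_deriv le_rfl) (hg.differentiableAt_deriv le_rfl) s

end Ansatz

section Tension

variable {n : ℕ} {l x₂ : ℝ → ℝ} {γ y₂ : ℝ → Euc n} {t s : ℝ}

theorem tau0_ansatz (hl : ContDiffAt ℝ 2 l t) (hx₂ : ContDiffAt ℝ 2 x₂ t)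
    (hγ : DifferentiableAt ℝ γ t) (hy₂ : DifferentiableAt ℝ y₂ t)
    (hlγ : ‖deriv γ t‖ = l t) (hs : s ≠ 0) :
    tau0 (fun t s => s * l t + s ^ 2 * x₂ t) (fun t s => γ t + s ^ 2 • y₂ t) t s
      = s ^ 2 * (2 * x₂ t + s * deriv (deriv l) t + s ^ 2 * deriv (deriv x₂) t
        + (-4 * l t * x₂ t + s * (2 * ⟪deriv γ t, deriv y₂ t⟫ + 4 * ‖y₂ t‖ ^ 2
          - 4 * x₂ t ^ 2 - deriv l t ^ 2 - 2 * s * deriv l t * deriv x₂ t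
          + s ^ 2 * (‖deriv y₂ t‖ ^ 2 - deriv x₂ t ^ 2))) / (l t + s * x₂ t)) := by
  rw [tau0, pds_pds_mul_add_sq_mul, pdt_pdt_mul_add_sq_mul hl hx₂, pds_mul_add_sq_mul,
    pdt_mul_add_sq_mul (hl.differentiableAt two_ne_zero) (hx₂.differentiableAt two_ne_zero),
    pds_add_sq_smul, pdt_add_sq_smul hγ hy₂, norm_smul, norm_add_sq_real, norm_smul,
    real_inner_smul_right, hlγ, Real.norm_eq_abs, Real.norm_eq_abs, mul_pow, mul_pow, sq_abs,
    sq_abs]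
  have hden : s * l t + s ^ 2 * x₂ t = s * (l t + s * x₂ t) := by ring
  rw [hden]
  rcases eq_or_ne (l t + s * x₂ t) 0 with h | h
  · simp only [h, mul_zero, div_zero]
    ring
  · field_simp
    ring

theorem tauTan_ansatz (hl : DifferentiableAt ℝ l t) (hx₂ : DifferentiableAt ℝ x₂ t)
    (hγ : ContDiffAt ℝ 2 γ t) (hy₂ : ContDiffAt ℝ 2 y₂ t) (hs : s ≠ 0) :
    tauTan (fun t s => s * l t + s ^ 2 * x₂ t) (fun t s => γ t + s ^ 2 • y₂ t) t s
      = s ^ 2 • (deriv (deriv γ) t + s ^ 2 • deriv (deriv y₂) t + (2 : ℝ) • y₂ t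
        - (2 / (l t + s * x₂ t)) • ((2 * (l t + 2 * s * x₂ t)) • y₂ t
          + (deriv l t + s * deriv x₂ t) • (deriv γ t + s ^ 2 • deriv y₂ t))) := by
  rw [tauTan, pds_pds_add_sq_smul, pdt_pdt_add_sq_smul hγ hy₂, pds_mul_add_sq_mul,
    pdt_mul_add_sq_mul hl hx₂, pds_add_sq_smul,
    pdt_add_sq_smul (hγ.differentiableAt two_ne_zero) (hy₂.differentiableAt two_ne_zero)]
  have hden : s * l t + s ^ 2 * x₂ t = s * (l t + s * x₂ t) := by ring
  rw [hden]
  rcases eq_or_ne (l t + s * x₂ t) 0 with h | h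
  · simp only [h, mul_zero, div_zero, zero_smul]
    module
  · match_scalars <;> field_simp

end Tension

section Coefficients

variable {n : ℕ} {I : Set ℝ} {γ y₂ : ℝ → Euc n} {x₂ : ℝ → ℝ} {t : ℝ}

theorem eq_zero_of_littleO_tau0 (hγ : ContDiffAt ℝ 3 γ t) (hγ' : deriv γ t ≠ 0)
    (hx₂ : ContDiffAt ℝ 2 x₂ t) (hy₂ : DifferentiableAt ℝ y₂ t)
    (h : LittleOAt I (fun t s => |tau0 (fun t s => s * ‖deriv γ t‖ + s ^ 2 * x₂ t)
      (fun t s => γ t + s ^ 2 • y₂ t) t s|) 2) (ht : t ∈ I) :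
    x₂ t = 0 := by
  have hl : ContDiffAt ℝ 2 (fun u => ‖deriv γ u‖) t :=
    (hγ.derivWithin (by norm_num)).norm ℝ hγ'
  have hL : ‖deriv γ t‖ ≠ 0 := norm_ne_zero_iff.2 hγ'
  have hlim := h.eq_zero_of_eq_pow_smul (G := fun t s => tau0 _ _ t s) (c := -2 * x₂ t) ht
    (fun s hs => tau0_ansatz hl hx₂ (hγ.differentiableAt (by norm_num)) hy₂ rfl hs.ne') ?_
  · simpa using hlim
  refine tendsto_nhdsWithin_of_tendsto_nhds ?_
  convert ContinuousAt.tendsto ?_ using 2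
  · simp only [zero_mul, mul_zero, add_zero, sub_zero, ne_eq, OfNat.ofNat_ne_zero,
      not_false_eq_true, zero_pow]
    field_simp
    ring
  · fun_prop (disch := simpa using hL)

theorem eq_of_littleO_tauTan (hγ : ContDiffAt ℝ 3 γ t) (hγ' : deriv γ t ≠ 0)
    (hx₂ : DifferentiableAt ℝ x₂ t) (hy₂ : ContDiffAt ℝ 2 y₂ t)
    (h : LittleOAt I (fun t s => ‖tauTan (fun t s => s * ‖deriv γ t‖ + s ^ 2 * x₂ t)
      (fun t s => γ t + s ^ 2 • y₂ t) t s‖) 2) (ht : t ∈ I) :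
    y₂ t = (1 / 2 : ℝ) • (deriv (deriv γ) t
      - (2 * ⟪deriv γ t, deriv (deriv γ) t⟫ / ‖deriv γ t‖ ^ 2) • deriv γ t) := by
  have hl : HasDerivAt (fun u => ‖deriv γ u‖) (⟪deriv γ t, deriv (deriv γ) t⟫ / ‖deriv γ t‖) t :=
    ((hγ.differentiableAt_deriv (by norm_num)).hasDerivAt).norm hγ'
  have hL : ‖deriv γ t‖ ≠ 0 := norm_ne_zero_iff.2 hγ'
  have hlim := h.eq_zero_of_eq_pow_smul (G := fun t s => tauTan _ _ t s)
    (c := deriv (deriv γ) t - (2 : ℝ) • y₂ t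
      - (2 * ⟪deriv γ t, deriv (deriv γ) t⟫ / ‖deriv γ t‖ ^ 2) • deriv γ t) ht
    (fun s hs => tauTan_ansatz hl.differentiableAt hx₂ (hγ.of_le (by norm_num)) hy₂ hs.ne') ?_
  · linear_combination (norm := module) (-1 / 2 : ℝ) • hlim
  refine tendsto_nhdsWithin_of_tendsto_nhds ?_
  convert ContinuousAt.tendsto ?_ using 2
  · rw [hl.deriv]
    simp only [ne_eq, OfNat.ofNat_ne_zero, not_false_eq_true, zero_pow, zero_smul, add_zero,
      zero_mul, mul_zero, smul_add]
    match_scalars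
    · rfl
    · field_simp
      norm_num
    · field_simp
  · fun_prop (disch := simpa using hL)

end Coefficients

section Sufficiency

variable {n : ℕ} {I : Set ℝ} {γ y₂ : ℝ → Euc n} {x₂ : ℝ → ℝ}

theorem littleO_tau0_of_eq_zero (hI : IsOpen I) (hγ : ContDiffOn ℝ 3 γ I)
    (hγ' : ∀ t ∈ I, deriv γ t ≠ 0) (hy₂ : ContDiffOn ℝ 1 y₂ I) (hx₂ : ∀ t ∈ I, x₂ t = 0) :
    LittleOAt I (fun t s => |tau0 (fun t s => s * ‖deriv γ t‖ + s ^ 2 * x₂ t)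
      (fun t s => γ t + s ^ 2 • y₂ t) t s|) 2 := by
  have hl : ContDiffOn ℝ 2 (fun u => ‖deriv γ u‖) I :=
    (hγ.deriv_of_isOpen hI (by norm_num)).norm ℝ hγ'
  have hdl : ContDiffOn ℝ 1 (deriv fun u => ‖deriv γ u‖) I := hl.deriv_of_isOpen hI (by norm_num)
  have hl_cont := hl.continuousOn
  have hdl_cont := hdl.continuousOn
  have hddl_cont := hdl.continuousOn_deriv_of_isOpen hI le_rfl
  have hdγ_cont := hγ.continuousOn_deriv_of_isOpen hI (by norm_num)
  have hy₂_cont := hy₂.continuousOn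
  have hdy₂_cont := hy₂.continuousOn_deriv_of_isOpen hI le_rfl
  refine LittleOAt.of_abs_le_pow_succ_mul (G := fun t s => deriv (deriv fun u => ‖deriv γ u‖) t
    + (2 * ⟪deriv γ t, deriv y₂ t⟫ + 4 * ‖y₂ t‖ ^ 2 - deriv (fun u => ‖deriv γ u‖) t ^ 2
      + s ^ 2 * ‖deriv y₂ t‖ ^ 2) / ‖deriv γ t‖) ?_ fun t ht s hs => ?_
  · fun_prop (disch := first | exact mapsTo_fst_prod |
      (rintro ⟨t, s⟩ ⟨ht, -⟩; exact norm_ne_zero_iff.2 (hγ' t ht)))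
  have hIt : I ∈ 𝓝 t := hI.mem_nhds ht
  have hx₂t : x₂ =ᶠ[𝓝 t] fun _ => 0 := eventuallyEq_of_mem hIt hx₂
  rw [abs_abs, tau0_ansatz (hl.contDiffAt hIt) (contDiffAt_const.congr_of_eventuallyEq hx₂t)
    ((hγ.differentiableOn (by norm_num)).differentiableAt hIt)
    ((hy₂.differentiableOn one_ne_zero).differentiableAt hIt) rfl hs.1.ne',
    hx₂ t ht, hx₂t.deriv_eq, hx₂t.deriv.deriv_eq]
  simp only [mul_zero, zero_add, add_zero, sub_zero, deriv_const', ne_eq, OfNat.ofNat_ne_zero,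
    not_false_eq_true, zero_pow, abs_mul, abs_pow, sq_abs, Real.norm_eq_abs]
  rw [mul_div_assoc, ← mul_add, abs_mul, abs_of_pos hs.1]
  exact le_of_eq (by ring)

theorem littleO_tauTan_of_eq (hI : IsOpen I) (hγ : ContDiffOn ℝ 3 γ I)
    (hγ' : ∀ t ∈ I, deriv γ t ≠ 0) (hy₂ : ContDiffOn ℝ 2 y₂ I) (hx₂ : ∀ t ∈ I, x₂ t = 0)
    (hy : ∀ t ∈ I, y₂ t = (1 / 2 : ℝ) • (deriv (deriv γ) t
      - (2 * ⟪deriv γ t, deriv (deriv γ) t⟫ / ‖deriv γ t‖ ^ 2) • deriv γ t)) :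
    LittleOAt I (fun t s => ‖tauTan (fun t s => s * ‖deriv γ t‖ + s ^ 2 * x₂ t)
      (fun t s => γ t + s ^ 2 • y₂ t) t s‖) 2 := by
  have hdγ : ContDiffOn ℝ 2 (deriv γ) I := hγ.deriv_of_isOpen hI (by norm_num)
  have hdy₂ : ContDiffOn ℝ 1 (deriv y₂) I := hy₂.deriv_of_isOpen hI (by norm_num)
  have hdγ_cont := hdγ.continuousOn
  have hddγ_cont := hdγ.continuousOn_deriv_of_isOpen hI (by norm_num)
  have hdy₂_cont := hdy₂.continuousOn
  have hddy₂_cont := hdy₂.continuousOn_deriv_of_isOpen hI le_rfl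
  refine LittleOAt.of_abs_le_pow_succ_mul (G := fun t s => s • (deriv (deriv y₂) t
    - (2 * ⟪deriv γ t, deriv (deriv γ) t⟫ / ‖deriv γ t‖ ^ 2) • deriv y₂ t)) ?_ fun t ht s hs => ?_
  · fun_prop (disch := first | exact mapsTo_fst_prod |
      (rintro ⟨t, s⟩ ⟨ht, -⟩; exact pow_ne_zero 2 (norm_ne_zero_iff.2 (hγ' t ht))))
  have hIt : I ∈ 𝓝 t := hI.mem_nhds ht
  have hx₂t : x₂ =ᶠ[𝓝 t] fun _ => 0 := eventuallyEq_of_mem hIt hx₂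
  have hl : HasDerivAt (fun u => ‖deriv γ u‖) (⟪deriv γ t, deriv (deriv γ) t⟫ / ‖deriv γ t‖) t :=
    ((hdγ.differentiableOn two_ne_zero).differentiableAt hIt).hasDerivAt.norm (hγ' t ht)
  have hL : ‖deriv γ t‖ ≠ 0 := norm_ne_zero_iff.2 (hγ' t ht)
  rw [abs_norm, tauTan_ansatz hl.differentiableAt
    ((differentiableAt_const 0).congr_of_eventuallyEq hx₂t)
    ((hγ.contDiffAt hIt).of_le (by norm_num)) (hy₂.contDiffAt hIt) hs.1.ne',
    hx₂ t ht, hx₂t.deriv_eq, hl.deriv, hy t ht]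
  refine le_of_eq ?_
  calc _ = ‖s ^ 2 • s ^ 2 • (deriv (deriv y₂) t
        - (2 * ⟪deriv γ t, deriv (deriv γ) t⟫ / ‖deriv γ t‖ ^ 2) • deriv y₂ t)‖ := by
        congr 2
        simp only [mul_zero, add_zero, deriv_const']
        match_scalars <;> field_simp <;> ring
    _ = _ := by
        rw [norm_smul, norm_smul, norm_smul, Real.norm_of_nonneg hs.1.le,
          Real.norm_of_nonneg (by positivity)]
        ring

end Sufficiency

theorem second_order_coefficients_of_asymptotically_harmonic_map_general
    (n : ℕ) (a b : ℝ)
    (γ y₂ : ℝ → Euc n) (x₂ : ℝ → ℝ)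
    (hγ : ContDiffOn ℝ (⊤ : ℕ∞) γ (Set.Ioo a b))
    (hγ' : ∀ t ∈ Set.Ioo a b, deriv γ t ≠ 0)
    (hx₂ : ContDiffOn ℝ (⊤ : ℕ∞) x₂ (Set.Ioo a b))
    (hy₂ : ContDiffOn ℝ (⊤ : ℕ∞) y₂ (Set.Ioo a b)) :
    (LittleOAt (Set.Ioo a b) (fun t s =>
        |tau0 (fun t' s' => s' * ‖deriv γ t'‖ + s' ^ 2 * x₂ t')
          (fun t' s' => γ t' + (s' ^ 2) • y₂ t') t s|) 2 ∧
      LittleOAt (Set.Ioo a b) (fun t s =>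
        ‖tauTan (fun t' s' => s' * ‖deriv γ t'‖ + s' ^ 2 * x₂ t')
          (fun t' s' => γ t' + (s' ^ 2) • y₂ t') t s‖) 2)
    ↔ ((∀ t ∈ Set.Ioo a b, x₂ t = 0) ∧
       (∀ t ∈ Set.Ioo a b, y₂ t = (1 / 2 : ℝ) •
          (deriv (deriv γ) t
            - (2 * ⟪deriv γ t, deriv (deriv γ) t⟫ / ‖deriv γ t‖ ^ 2) • deriv γ t))) := by
  have hγ₃ : ContDiffOn ℝ 3 γ (Ioo a b) := hγ.of_le (WithTop.coe_le_coe.2 le_top)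
  have hx₂₂ : ContDiffOn ℝ 2 x₂ (Ioo a b) := hx₂.of_le (WithTop.coe_le_coe.2 le_top)
  have hy₂₂ : ContDiffOn ℝ 2 y₂ (Ioo a b) := hy₂.of_le (WithTop.coe_le_coe.2 le_top)
  have hnhds : ∀ t ∈ Ioo a b, Ioo a b ∈ 𝓝 t := fun t ht => isOpen_Ioo.mem_nhds ht
  constructor
  · rintro ⟨htau0, htauTan⟩
    refine ⟨fun t ht => ?_, fun t ht => ?_⟩
    · exact eq_zero_of_littleO_tau0 (hγ₃.contDiffAt (hnhds t ht)) (hγ' t ht)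
        (hx₂₂.contDiffAt (hnhds t ht)) ((hy₂₂.contDiffAt (hnhds t ht)).differentiableAt two_ne_zero)
        htau0 ht
    · exact eq_of_littleO_tauTan (hγ₃.contDiffAt (hnhds t ht)) (hγ' t ht)
        ((hx₂₂.contDiffAt (hnhds t ht)).differentiableAt two_ne_zero)
        (hy₂₂.contDiffAt (hnhds t ht)) htauTan ht
  · rintro ⟨hx₀, hy⟩
    exact ⟨littleO_tau0_of_eq_zero isOpen_Ioo hγ₃ hγ' (hy₂₂.of_le one_le_two) hx₀,
      littleO_tauTan_of_eq isOpen_Ioo hγ₃ hγ' hy₂₂ hx₀ hy⟩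

/-- For `u(t,s) = (s·λ(t) + s²·x₂(t), γ(t) + s²·y₂(t))` with `λ = |γ'|`, the
tension field satisfies `τ(u)⁰ = o(s²)` and `τ(u)ⁱ = o(s²)` iff `x₂ ≡ 0` and
`y₂ = (1/2)(γ'' − (2⟨γ',γ''⟩/λ²)γ') = (1/2)λ²α`. -/
theorem second_order_coefficients_of_asymptotically_harmonic_map
    (n : ℕ) (hn : 2 ≤ n) (a b : ℝ)
    (γ y₂ : ℝ → Euc n) (x₂ : ℝ → ℝ)
    (hγ : ContDiffOn ℝ (⊤ : ℕ∞) γ (Set.Ioo a b))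
    (hγ' : ∀ t ∈ Set.Ioo a b, deriv γ t ≠ 0)
    (hx₂ : ContDiffOn ℝ (⊤ : ℕ∞) x₂ (Set.Ioo a b))
    (hy₂ : ContDiffOn ℝ (⊤ : ℕ∞) y₂ (Set.Ioo a b)) :
    (LittleOAt (Set.Ioo a b) (fun t s =>
        |tau0 (fun t' s' => s' * ‖deriv γ t'‖ + s' ^ 2 * x₂ t')
          (fun t' s' => γ t' + (s' ^ 2) • y₂ t') t s|) 2 ∧
      LittleOAt (Set.Ioo a b) (fun t s =>
        ‖tauTan (fun t' s' => s' * ‖deriv γ t'‖ + s' ^ 2 * x₂ t')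
          (fun t' s' => γ t' + (s' ^ 2) • y₂ t') t s‖) 2)
    ↔ ((∀ t ∈ Set.Ioo a b, x₂ t = 0) ∧
       (∀ t ∈ Set.Ioo a b, y₂ t = (1 / 2 : ℝ) •
          (deriv (deriv γ) t
            - (2 * ⟪deriv γ t, deriv (deriv γ) t⟫ / ‖deriv γ t‖ ^ 2) • deriv γ t))) :=
  second_order_coefficients_of_asymptotically_harmonic_map_general n a b γ y₂ x₂ hγ hγ' hx₂ hy₂
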